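/- Let X = x∂_x and Y = Φ_v^{λ₁,λ₂} = (v²−1)∂²_v + (λ₁−λ₂+(λ₁+λ₂)v)∂_v, regarded (after the change of variables t = x+y, v = (y−x)/(x+y)) as operators on polynomials in x, y. Restricted to homogeneous polynomials of degree N, they satisfy the Hahn algebra relations: [X,Y] = Z, [X,Z] = 2X² + (λ₁−λ₂−2N)X + Y − λ₁N, and [Y,Z] = −2{X,Y} − (λ₁+λ₂)(λ₁+λ₂−2)X − (λ₁−λ₂−2N)Y + λ₁(λ₁+λ₂−2)N. -/

import Mathlib

open Finset MvPolynomial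

/-- Action of `H = λ₁+λ₂+2x∂ₓ+2y∂_y` on `ℂ[x,y]` (tensor of two lowest-weight
Verma modules with weights `a`, `b`). -/
noncomputable def Hop (a b : ℂ) (p : MvPolynomial (Fin 2) ℂ) : MvPolynomial (Fin 2) ℂ :=
  C (a + b) * p + 2 * (X 0 * pderiv 0 p + X 1 * pderiv 1 p)

/-- Action of `E = x + y` on `ℂ[x,y]`. -/
noncomputable def Eop (p : MvPolynomial (Fin 2) ℂ) : MvPolynomial (Fin 2) ℂ :=
  (X 0 + X 1) * p

/-- Action of `F = -x∂ₓ² - y∂_y² - λ₁∂ₓ - λ₂∂_y` on `ℂ[x,y]`. -/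
noncomputable def Fop (a b : ℂ) (p : MvPolynomial (Fin 2) ℂ) : MvPolynomial (Fin 2) ℂ :=
  -(X 0 * pderiv 0 (pderiv 0 p)) - X 1 * pderiv 1 (pderiv 1 p)
    - C a * pderiv 0 p - C b * pderiv 1 p

/-- Action of the diagonal Casimir `δ(C) = (H²+2H)/4 + FE` on `ℂ[x,y]`. -/
noncomputable def CasOp (a b : ℂ) (p : MvPolynomial (Fin 2) ℂ) : MvPolynomial (Fin 2) ℂ :=
  C ((4 : ℂ)⁻¹) * (Hop a b (Hop a b p) + 2 * Hop a b p) + Fop a b (Eop p)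

/-- `X = x∂ₓ` on `ℂ[x,y]`. -/
noncomputable def XHahn (p : MvPolynomial (Fin 2) ℂ) : MvPolynomial (Fin 2) ℂ :=
  X 0 * pderiv 0 p

/-- `Y = δ(C) - (λ₁+λ₂)(λ₁+λ₂-2)/4`, which acts as the Jacobi operator `Φ_v^{λ₁,λ₂}`
after the change of variables `t = x+y`, `v = (y-x)/(x+y)`. -/
noncomputable def YHahn (a b : ℂ) (p : MvPolynomial (Fin 2) ℂ) : MvPolynomial (Fin 2) ℂ :=
  CasOp a b p - C ((a + b) * (a + b - 2) / 4) * p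

/-- `Z = [X,Y]`. -/
noncomputable def ZHahn (a b : ℂ) (p : MvPolynomial (Fin 2) ℂ) : MvPolynomial (Fin 2) ℂ :=
  XHahn (YHahn a b p) - YHahn a b (XHahn p)

/-!
On an eigenvector of the Euler operator `x∂ₓ + y∂_y` with eigenvalue `m` (for instance a
homogeneous polynomial of degree `m`), `H` acts by the scalar `a + b + 2m`, so `Y` acts as
`(m + 1)(a + b + m) + FE`. The operators `X`, `E` and `F` shift the Euler eigenvalue by `0`, `1`
and `-1`, so `Y` and `Z` preserve every eigenspace, and both relations become identities between
differential operators that hold modulo the Euler relations of `q` and of its partial derivatives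
of order at most two.
-/

namespace MvPolynomial

variable {σ R : Type*}

theorem pderiv_comm [CommSemiring R] (i j : σ) (p : MvPolynomial σ R) :
    pderiv i (pderiv j p) = pderiv j (pderiv i p) := by
  classical
  induction p using MvPolynomial.induction_on with
  | C c => simp
  | add p q hp hq => simp only [map_add, hp, hq]
  | mul_X q s hq =>
    simp only [pderiv_mul, map_add, hq, pderiv_X, Pi.single_apply]
    split_ifs <;> simp; ring

variable [CommRing R] [Fintype σ]

def IsEulerEigen (m : R) (q : MvPolynomial σ R) : Prop :=
  ∑ i, X i * pderiv i q = C m * q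

theorem IsHomogeneous.isEulerEigen {n : ℕ} {q : MvPolynomial σ R} (h : q.IsHomogeneous n) :
    IsEulerEigen (n : R) q := by
  rw [IsEulerEigen, h.sum_X_mul_pderiv, nsmul_eq_mul, map_natCast]

theorem isEulerEigen_X (i : σ) : IsEulerEigen (1 : R) (X i) := by
  classical
  simp [IsEulerEigen, pderiv_X, Pi.single_apply]

theorem isEulerEigen_C (c : R) : IsEulerEigen (0 : R) (C c : MvPolynomial σ R) := by
  simp [IsEulerEigen]

namespace IsEulerEigen

variable {m n : R} {p q : MvPolynomial σ R}

theorem add (hp : IsEulerEigen m p) (hq : IsEulerEigen m q) : IsEulerEigen m (p + q) := by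
  unfold IsEulerEigen at *
  simp only [map_add, mul_add, Finset.sum_add_distrib, hp, hq]

theorem neg (hq : IsEulerEigen m q) : IsEulerEigen m (-q) := by
  unfold IsEulerEigen at *
  simp only [map_neg, mul_neg, Finset.sum_neg_distrib, hq]

theorem sub (hp : IsEulerEigen m p) (hq : IsEulerEigen m q) : IsEulerEigen m (p - q) := by
  simpa only [sub_eq_add_neg] using hp.add hq.neg

theorem mul (hp : IsEulerEigen m p) (hq : IsEulerEigen n q) : IsEulerEigen (m + n) (p * q) := by
  unfold IsEulerEigen at *
  have leibniz : ∑ i, X i * pderiv i (p * q) =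
      (∑ i, X i * pderiv i p) * q + p * ∑ i, X i * pderiv i q := by
    rw [Finset.sum_mul, Finset.mul_sum, ← Finset.sum_add_distrib]
    exact Finset.sum_congr rfl fun i _ => by rw [pderiv_mul]; ring
  rw [leibniz, hp, hq, map_add]
  ring

theorem C_mul (c : R) (hq : IsEulerEigen m q) : IsEulerEigen m (C c * q) := by
  simpa using (isEulerEigen_C c).mul hq

-- `[∂ⱼ, ∑ Xᵢ∂ᵢ] = ∂ⱼ`
theorem pderiv (j : σ) (hq : IsEulerEigen m q) : IsEulerEigen (m - 1) (pderiv j q) := by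
  classical
  unfold IsEulerEigen at *
  have h := congrArg (MvPolynomial.pderiv j) hq
  simp only [map_sum, pderiv_mul, pderiv_X, Pi.single_apply, pderiv_C, ite_mul, one_mul,
    zero_mul, zero_add, Finset.sum_add_distrib, Finset.sum_ite_eq', Finset.mem_univ, if_true,
    pderiv_comm j] at h
  rw [map_sub, map_one]
  linear_combination h

end IsEulerEigen

theorem isEulerEigen_fin_two_iff {m : R} {q : MvPolynomial (Fin 2) R} :
    IsEulerEigen m q ↔ X 0 * pderiv 0 q + X 1 * pderiv 1 q = C m * q := by
  rw [IsEulerEigen, Fin.sum_univ_two]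

end MvPolynomial

section HahnOperators

variable {m : ℂ} {q : MvPolynomial (Fin 2) ℂ}

theorem isEulerEigen_XHahn (hq : IsEulerEigen m q) : IsEulerEigen m (XHahn q) := by
  simpa [XHahn] using (isEulerEigen_X 0).mul (hq.pderiv 0)

theorem isEulerEigen_Eop (hq : IsEulerEigen m q) : IsEulerEigen (m + 1) (Eop q) := by
  simpa [Eop, add_comm] using ((isEulerEigen_X 0).add (isEulerEigen_X 1)).mul hq

theorem isEulerEigen_Fop (a b : ℂ) (hq : IsEulerEigen (m + 1) q) :
    IsEulerEigen m (Fop a b q) := by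
  have secondOrder (i : Fin 2) : IsEulerEigen m (X i * pderiv i (pderiv i q)) := by
    convert (isEulerEigen_X i).mul ((hq.pderiv i).pderiv i) using 1; ring
  have firstOrder (i : Fin 2) (c : ℂ) : IsEulerEigen m (C c * pderiv i q) := by
    simpa using (hq.pderiv i).C_mul c
  exact (((secondOrder 0).neg.sub (secondOrder 1)).sub (firstOrder 0 a)).sub (firstOrder 1 b)

theorem Hop_of_isEulerEigen (a b : ℂ) (hq : IsEulerEigen m q) :
    Hop a b q = C (a + b + 2 * m) * q := by
  rw [Hop, isEulerEigen_fin_two_iff.mp hq]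
  simp only [map_add, map_mul, map_ofNat]
  ring

theorem YHahn_of_isEulerEigen (a b : ℂ) (hq : IsEulerEigen m q) :
    YHahn a b q = C ((m + 1) * (a + b + m)) * q + Fop a b (Eop q) := by
  have hH : Hop a b (Hop a b q) = C ((a + b + 2 * m) ^ 2) * q := by
    rw [Hop_of_isEulerEigen a b hq, Hop_of_isEulerEigen a b (hq.C_mul _), map_pow]
    ring
  rw [YHahn, CasOp, hH, Hop_of_isEulerEigen a b hq]
  have h4 : (C (4 : ℂ)⁻¹ : MvPolynomial (Fin 2) ℂ) * 4 = 1 := by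
    rw [← map_ofNat C 4, ← map_mul]
    norm_num
  simp only [map_add, map_mul, map_sub, map_pow, div_eq_mul_inv, map_ofNat, map_one]
  linear_combination (C m + 1) * (C a + C b + C m) * q * h4

theorem isEulerEigen_Fop_Eop (a b : ℂ) (hq : IsEulerEigen m q) :
    IsEulerEigen m (Fop a b (Eop q)) :=
  isEulerEigen_Fop a b (isEulerEigen_Eop hq)

theorem isEulerEigen_YHahn (a b : ℂ) (hq : IsEulerEigen m q) :
    IsEulerEigen m (YHahn a b q) := by
  rw [YHahn_of_isEulerEigen a b hq]
  exact (hq.C_mul _).add (isEulerEigen_Fop_Eop a b hq)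

theorem ZHahn_of_isEulerEigen (a b : ℂ) (hq : IsEulerEigen m q) :
    ZHahn a b q = XHahn (Fop a b (Eop q)) - Fop a b (Eop (XHahn q)) := by
  rw [ZHahn, YHahn_of_isEulerEigen a b hq, YHahn_of_isEulerEigen a b (isEulerEigen_XHahn hq)]
  simp only [XHahn, map_add, pderiv_C_mul]
  ring

theorem isEulerEigen_ZHahn (a b : ℂ) (hq : IsEulerEigen m q) :
    IsEulerEigen m (ZHahn a b q) := by
  rw [ZHahn_of_isEulerEigen a b hq]
  exact (isEulerEigen_XHahn (isEulerEigen_Fop_Eop a b hq)).sub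
    (isEulerEigen_Fop_Eop a b (isEulerEigen_XHahn hq))

theorem XHahn_ZHahn_sub_ZHahn_XHahn (a b : ℂ) (hq : IsEulerEigen m q) :
    XHahn (ZHahn a b q) - ZHahn a b (XHahn q) =
      2 * XHahn (XHahn q) + C (a - b - 2 * m) * XHahn q + YHahn a b q - C (a * m) * q := by
  have h00 := isEulerEigen_fin_two_iff.mp hq
  have h10 := isEulerEigen_fin_two_iff.mp (hq.pderiv 0)
  have h01 := isEulerEigen_fin_two_iff.mp (hq.pderiv 1)
  simp only [pderiv_comm (0 : Fin 2) 1, map_sub, map_one] at h10 h01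
  rw [ZHahn_of_isEulerEigen a b hq, ZHahn_of_isEulerEigen a b (isEulerEigen_XHahn hq),
    YHahn_of_isEulerEigen a b hq]
  simp only [XHahn, Fop, Eop, map_add, map_sub, map_neg, pderiv_mul, pderiv_C,
    pderiv_X_self, pderiv_one, map_zero, pderiv_X_of_ne zero_ne_one, pderiv_X_of_ne one_ne_zero,
    pderiv_comm (0 : Fin 2) 1, map_mul, map_ofNat, map_one]
  linear_combination (1 + C m + C b) * h00 + X 1 * h01 - X 0 * h10

set_option maxHeartbeats 1000000 in
theorem YHahn_ZHahn_sub_ZHahn_YHahn (a b : ℂ) (hq : IsEulerEigen m q) :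
    YHahn a b (ZHahn a b q) - ZHahn a b (YHahn a b q) =
      -2 * (XHahn (YHahn a b q) + YHahn a b (XHahn q))
        - C ((a + b) * (a + b - 2)) * XHahn q - C (a - b - 2 * m) * YHahn a b q
        + C (a * (a + b - 2) * m) * q := by
  have h00 := isEulerEigen_fin_two_iff.mp hq
  have h10 := isEulerEigen_fin_two_iff.mp (hq.pderiv 0)
  have h01 := isEulerEigen_fin_two_iff.mp (hq.pderiv 1)
  have h20 := isEulerEigen_fin_two_iff.mp ((hq.pderiv 0).pderiv 0)
  have h02 := isEulerEigen_fin_two_iff.mp ((hq.pderiv 1).pderiv 1)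
  simp only [pderiv_comm (0 : Fin 2) 1, map_sub, map_one] at h10 h01 h20 h02
  rw [YHahn_of_isEulerEigen a b (isEulerEigen_ZHahn a b hq),
    ZHahn_of_isEulerEigen a b (isEulerEigen_YHahn a b hq), ZHahn_of_isEulerEigen a b hq,
    YHahn_of_isEulerEigen a b (isEulerEigen_XHahn hq), YHahn_of_isEulerEigen a b hq]
  simp only [XHahn, Fop, Eop, map_add, map_sub, map_neg, pderiv_mul, pderiv_C,
    pderiv_X_self, pderiv_one, map_zero, pderiv_X_of_ne zero_ne_one, pderiv_X_of_ne one_ne_zero,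
    pderiv_comm (0 : Fin 2) 1, map_mul, map_ofNat, map_one]
  linear_combination
    (2 * C m + 2 * C m ^ 2 + C b + 3 * C b * C m + C b ^ 2 - 3 * C a + C a * C m + C a * C b) * h00
      + (2 * X 1 * C m + X 1 * C b + X 1 * C a - 2 * X 0 * C b) * h01
      - 2 * X 0 * X 1 * h02
      - (2 * X 1 * C a + 8 * X 0 + 2 * X 0 * C m + X 0 * C b + 5 * X 0 * C a) * h10
      - (2 * X 0 * X 1 + 4 * X 0 ^ 2) * h20

end HahnOperators

theorem hahn_relations_on_homogeneous_general (a b : ℂ) (N : ℕ)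
    (p : MvPolynomial (Fin 2) ℂ) (hp : p.IsHomogeneous N) :
    (XHahn (ZHahn a b p) - ZHahn a b (XHahn p) =
      2 * XHahn (XHahn p) + C (a - b - 2 * (N : ℂ)) * XHahn p + YHahn a b p
        - C (a * (N : ℂ)) * p) ∧
    (YHahn a b (ZHahn a b p) - ZHahn a b (YHahn a b p) =
      -2 * (XHahn (YHahn a b p) + YHahn a b (XHahn p))
        - C ((a + b) * (a + b - 2)) * XHahn p - C (a - b - 2 * (N : ℂ)) * YHahn a b p
        + C (a * (a + b - 2) * (N : ℂ)) * p) :=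
  ⟨XHahn_ZHahn_sub_ZHahn_XHahn a b hp.isEulerEigen,
    YHahn_ZHahn_sub_ZHahn_YHahn a b hp.isEulerEigen⟩

theorem hahn_relations_on_homogeneous (a b : ℂ) (N : ℕ) (hN : 0 < N)
    (p : MvPolynomial (Fin 2) ℂ) (hp : p.IsHomogeneous N) :
    (XHahn (ZHahn a b p) - ZHahn a b (XHahn p) =
      2 * XHahn (XHahn p) + C (a - b - 2 * (N : ℂ)) * XHahn p + YHahn a b p
        - C (a * (N : ℂ)) * p) ∧
    (YHahn a b (ZHahn a b p) - ZHahn a b (YHahn a b p) =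
      -2 * (XHahn (YHahn a b p) + YHahn a b (XHahn p))
        - C ((a + b) * (a + b - 2)) * XHahn p - C (a - b - 2 * (N : ℂ)) * YHahn a b p
        + C (a * (a + b - 2) * (N : ℂ)) * p) :=
  hahn_relations_on_homogeneous_general a b N p hp
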